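/- In the graph G_l, for any two nodes v_i(j1), v_i(j2) in the same level i with δ(j1, j2) = δ > 0, the truncated views agree up to depth δ: V_δ(v_i(j1)) = V_δ(v_i(j2)). -/

import Mathlib

/-!
Depth-`k` views are preserved by any port-respecting simulation: if `R (k + 1) v w` forces equal
degrees, equal return ports and `R k` between corresponding neighbours, then `R k`-related nodes
have equal depth-`k` views. In `G_l` take `R k` to be "same level, columns congruent mod `2 ^ k`"
(for `k ≤ l`). Degrees and port numbers depend only on the level and the parity of the column, and
every edge changes the column by an operation (adding `p` mod `2 ^ l`, xor with `1`, swapping two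
adjacent bits) that turns congruence mod `2 ^ (k + 1)` into congruence mod `2 ^ k`.
-/


/-- A port-labeled network: each node `v` has degree `deg v`, and for each port
`p ∈ {1,…,deg v}`, `next v p` is the neighbor reached via port `p` and `ret v p`
is the port number of the same edge at that neighbor (i.e. `end(v,p) = λ(next(v,p), v)`). -/
structure PortNetwork (V : Type*) where
  deg : V → ℕ
  next : V → ℕ → V
  ret : V → ℕ → ℕ

/-- Coherence of a port network: following a valid port and then the corresponding
return port leads back, with matching labels. -/
def PortNetwork.Coherent {V : Type*} (N : PortNetwork V) : Prop :=
  ∀ v p, 1 ≤ p → p ≤ N.deg v →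
    1 ≤ N.ret v p ∧ N.ret v p ≤ N.deg (N.next v p) ∧
      N.next (N.next v p) (N.ret v p) = v ∧ N.ret (N.next v p) (N.ret v p) = p

/-- Trees with edges labeled by pairs of port numbers: the datatype of (truncated) views. -/
inductive ViewTree : Type
  | node : List (ℕ × ℕ × ViewTree) → ViewTree

/-- The view of node `v` truncated to depth `k`: the root has one child per port
`p ∈ {1,…,deg v}`, the corresponding edge carrying the label pair `(p, end(v,p))`,
and the child subtree is the view of `next v p` truncated to depth `k-1`. -/
def view {V : Type*} (N : PortNetwork V) : ℕ → V → ViewTree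
  | 0, _ => ViewTree.node []
  | k + 1, v => ViewTree.node
      ((List.range (N.deg v)).map fun t =>
        (t + 1, N.ret v (t + 1), view N k (N.next v (t + 1))))

/-- A list of ports is a valid walk from `v` if each successive port is legal
at the node reached so far. -/
def ValidWalk {V : Type*} (N : PortNetwork V) : V → List ℕ → Prop
  | _, [] => True
  | v, p :: ps => 1 ≤ p ∧ p ≤ N.deg v ∧ ValidWalk N (N.next v p) ps

/-- The endpoint of the walk from `v` following the given list of ports. -/
def walkEnd {V : Type*} (N : PortNetwork V) : V → List ℕ → V
  | v, [] => v
  | v, p :: ps => walkEnd N (N.next v p) ps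

/-- The signature of a walk: the list of pairs (outgoing port, incoming port at the
other end) of the successively traversed edges. Two walks are isomorphic iff their
signatures are equal. -/
def walkSig {V : Type*} (N : PortNetwork V) : V → List ℕ → List (ℕ × ℕ)
  | _, [] => []
  | v, p :: ps => (p, N.ret v p) :: walkSig N (N.next v p) ps

/-- `bbit k j = 1` if `(j mod 2^(k+1)) ≥ 2^k`, and `0` otherwise (the `k`-th bit of `j`). -/
def bbit (k j : ℕ) : ℕ := if 2 ^ k ≤ j % 2 ^ (k + 1) then 1 else 0

/-- The map swapping the bits at positions `i` and `i-1` (for `i ≥ 1`). -/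
def piSwap (i j : ℕ) : ℕ :=
  (j - 2 ^ i * bbit i j - 2 ^ (i - 1) * bbit (i - 1) j)
    + 2 ^ i * bbit (i - 1) j + 2 ^ (i - 1) * bbit i j

/-- The permutation `π_i`: identity for `i = 0`, bit swap of positions `i, i-1` otherwise. -/
def piPerm (i j : ℕ) : ℕ := if i = 0 then j else piSwap i j

/-- The port-labeled graph `G_l` of the paper, on nodes `v_i(j) = (i, j)` with levels
`i ∈ {0,…,l+1}` and columns `j ∈ {0,…,2^l-1}`.
* Stage 1: a matching inside level 0 joining `v_0(j)` and `v_0(j ^^^ 1)`, with port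
  `1 + ((j+1) mod 2)` at `v_0(j)`.
* Stage 2: a clique inside level `l+1`, with `λ(v_{l+1}(j), v_{l+1}((j+p) mod 2^l)) = p`.
* Stage 3: edges from `v_{l+1}(j)` to `v_i(j)` for every `i ≤ l`, with port `2^l + i`
  at the top and port `1` (or `1 + (j mod 2)` at level 0) at the bottom.
* Stage 4: matchings between consecutive levels via `π_i`, with ports `3` (up), `2` (down). -/
def Gl (l : ℕ) : PortNetwork (ℕ × ℕ) where
  deg := fun v => if v.1 = l + 1 then 2 ^ l + l else if v.1 = l then 2 else 3
  next := fun v p =>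
    if v.1 = l + 1 then
      (if p ≤ 2 ^ l - 1 then (l + 1, (v.2 + p) % 2 ^ l) else (p - 2 ^ l, v.2))
    else if v.1 = 0 then
      (if p = 3 then (1, v.2)
       else if p = 1 + v.2 % 2 then (l + 1, v.2)
       else (0, v.2 ^^^ 1))
    else
      (if p = 1 then (l + 1, v.2)
       else if p = 2 then (v.1 - 1, piPerm (v.1 - 1) v.2)
       else (v.1 + 1, piPerm v.1 v.2))
  ret := fun v p =>
    if v.1 = l + 1 then
      (if p ≤ 2 ^ l - 1 then 2 ^ l - p
       else if p = 2 ^ l then 1 + v.2 % 2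
       else 1)
    else if v.1 = 0 then
      (if p = 3 then 2
       else if p = 1 + v.2 % 2 then 2 ^ l
       else 1 + v.2 % 2)
    else
      (if p = 1 then 2 ^ l + v.1
       else if p = 2 then 3
       else 2)

/-- `bitsAgree l j1 j2` is the largest `δ ∈ {0,...,l}` such that `j1 ≡ j2 (mod 2^δ)`. -/
def bitsAgree (l j1 j2 : ℕ) : ℕ := Nat.findGreatest (fun d => j1 % 2 ^ d = j2 % 2 ^ d) l

section View

variable {V : Type*} {N : PortNetwork V}

theorem view_eq_of_forall_port (R : ℕ → V → V → Prop)
    (hR : ∀ k v w, R (k + 1) v w → N.deg v = N.deg w ∧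
      ∀ p, 1 ≤ p → p ≤ N.deg v → N.ret v p = N.ret w p ∧ R k (N.next v p) (N.next w p)) :
    ∀ k v w, R k v w → view N k v = view N k w := by
  intro k
  induction k with
  | zero => intro _ _ _; rfl
  | succ k ih =>
    intro v w hvw
    obtain ⟨hdeg, hport⟩ := hR k v w hvw
    simp only [view, ← hdeg]
    congr 1
    refine List.map_congr_left fun t ht => ?_
    obtain ⟨hret, hnext⟩ := hport (t + 1) (by omega) (by simpa using ht)
    rw [hret, ih _ _ hnext]

end View

theorem bbit_eq_div_pow_mod (k j : ℕ) : bbit k j = j / 2 ^ k % 2 := by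
  have hsplit := Nat.mod_pow_succ (x := j) (b := 2) (k := k)
  have hlow : j % 2 ^ k < 2 ^ k := Nat.mod_lt _ (by positivity)
  unfold bbit
  rcases Nat.mod_two_eq_zero_or_one (j / 2 ^ k) with h | h <;> rw [h] at hsplit ⊢ <;>
    split_ifs <;> omega

theorem bbit_congr {k j1 j2 : ℕ} (h : j1 ≡ j2 [MOD 2 ^ (k + 1)]) : bbit k j1 = bbit k j2 := by
  unfold bbit
  rw [h]

theorem two_pow_mul_bbit_add_le (m j : ℕ) :
    2 ^ (m + 1) * bbit (m + 1) j + 2 ^ m * bbit m j ≤ j := by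
  have h1 := Nat.mod_pow_succ (x := j) (b := 2) (k := m + 1)
  have h0 := Nat.mod_pow_succ (x := j) (b := 2) (k := m)
  rw [bbit_eq_div_pow_mod, bbit_eq_div_pow_mod]
  have := Nat.mod_le j (2 ^ (m + 1 + 1))
  omega

theorem piSwap_add (m j : ℕ) :
    piSwap (m + 1) j + (2 ^ (m + 1) * bbit (m + 1) j + 2 ^ m * bbit m j) =
      j + (2 ^ (m + 1) * bbit m j + 2 ^ m * bbit (m + 1) j) := by
  have := two_pow_mul_bbit_add_le m j
  unfold piSwap
  simp only [Nat.add_sub_cancel]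
  omega

theorem piSwap_modEq {m k j1 j2 : ℕ} (hm : 1 ≤ m) (h : j1 ≡ j2 [MOD 2 ^ (k + 1)]) :
    piSwap m j1 ≡ piSwap m j2 [MOD 2 ^ k] := by
  obtain ⟨m, rfl⟩ : ∃ m', m = m' + 1 := ⟨m - 1, by omega⟩
  have hk : j1 ≡ j2 [MOD 2 ^ k] := h.of_dvd (pow_dvd_pow 2 k.le_succ)
  by_cases hmk : m + 1 ≤ k
  · -- both swapped bits lie below position `k + 1`, so they agree for `j1` and `j2`
    have e1 : bbit (m + 1) j1 = bbit (m + 1) j2 :=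
      bbit_congr (h.of_dvd (pow_dvd_pow 2 (by omega)))
    have e0 : bbit m j1 = bbit m j2 := bbit_congr (h.of_dvd (pow_dvd_pow 2 (by omega)))
    have := piSwap_add m j1
    rw [e1, e0] at this
    refine Nat.ModEq.add_right_cancel' (2 ^ (m + 1) * bbit (m + 1) j2 + 2 ^ m * bbit m j2) ?_
    rw [this, piSwap_add m j2]
    exact hk.add_right _
  · -- both swapped bits lie at or above position `k`, so the swap is invisible mod `2 ^ k`
    have hdvd : ∀ a b, 2 ^ k ∣ 2 ^ (m + 1) * a + 2 ^ m * b := fun a b =>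
      dvd_add (Dvd.dvd.mul_right (pow_dvd_pow 2 (by omega)) _)
        (Dvd.dvd.mul_right (pow_dvd_pow 2 (by omega)) _)
    have hself : ∀ j, piSwap (m + 1) j ≡ j [MOD 2 ^ k] := fun j =>
      Nat.ModEq.add_right_cancel ((Nat.modEq_zero_iff_dvd.2 (hdvd _ _)).trans
        (Nat.modEq_zero_iff_dvd.2 (hdvd _ _)).symm) (by rw [piSwap_add])
    exact (hself j1).trans (hk.trans (hself j2).symm)

theorem piPerm_modEq (m : ℕ) {k j1 j2 : ℕ} (h : j1 ≡ j2 [MOD 2 ^ (k + 1)]) :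
    piPerm m j1 ≡ piPerm m j2 [MOD 2 ^ k] := by
  unfold piPerm
  split_ifs with hm
  · exact h.of_dvd (pow_dvd_pow 2 k.le_succ)
  · exact piSwap_modEq (by omega) h

theorem Nat.ModEq.xor_two_pow {k j1 j2 : ℕ} (b : ℕ) (h : j1 ≡ j2 [MOD 2 ^ k]) :
    j1 ^^^ b ≡ j2 ^^^ b [MOD 2 ^ k] := by
  unfold Nat.ModEq
  rw [Nat.xor_mod_two_pow, Nat.xor_mod_two_pow, h]

section Gl

variable {l i j1 j2 : ℕ}

theorem Gl_ret_eq (p : ℕ) (h : j1 % 2 = j2 % 2) :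
    (Gl l).ret (i, j1) p = (Gl l).ret (i, j2) p := by
  simp only [Gl, h]

theorem Gl_next_fst_eq (p : ℕ) (h : j1 % 2 = j2 % 2) :
    ((Gl l).next (i, j1) p).1 = ((Gl l).next (i, j2) p).1 := by
  simp only [Gl, h]
  split_ifs <;> rfl

theorem Gl_next_snd_modEq (p : ℕ) {k : ℕ} (hk : k ≤ l) (h : j1 ≡ j2 [MOD 2 ^ (k + 1)]) :
    ((Gl l).next (i, j1) p).2 ≡ ((Gl l).next (i, j2) p).2 [MOD 2 ^ k] := by
  have hk' : j1 ≡ j2 [MOD 2 ^ k] := h.of_dvd (pow_dvd_pow 2 k.le_succ)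
  have h2 : j1 % 2 = j2 % 2 := h.of_dvd (dvd_pow_self 2 k.succ_ne_zero)
  simp only [Gl, h2]
  split_ifs
  · exact ((Nat.mod_modEq _ _).of_dvd (pow_dvd_pow 2 hk)).trans
      ((hk'.add_right p).trans ((Nat.mod_modEq _ _).of_dvd (pow_dvd_pow 2 hk)).symm)
  all_goals first
    | exact hk'
    | exact hk'.xor_two_pow 1
    | exact piPerm_modEq _ h

theorem Gl_view_eq_of_modEq {k : ℕ} (hk : k ≤ l) (h : j1 ≡ j2 [MOD 2 ^ k]) :
    view (Gl l) k (i, j1) = view (Gl l) k (i, j2) := by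
  refine view_eq_of_forall_port (fun n v w => n ≤ l ∧ v.1 = w.1 ∧ v.2 ≡ w.2 [MOD 2 ^ n])
    (fun n v w ⟨hn, hfst, hsnd⟩ => ?_) k _ _ ⟨hk, rfl, h⟩
  obtain ⟨a, b⟩ := v
  obtain ⟨a', b'⟩ := w
  obtain rfl : a = a' := hfst
  have hpar : b % 2 = b' % 2 := hsnd.of_dvd (dvd_pow_self 2 n.succ_ne_zero)
  exact ⟨rfl, fun p _ _ => ⟨Gl_ret_eq p hpar,
    by omega, Gl_next_fst_eq p hpar, Gl_next_snd_modEq p (by omega) hsnd⟩⟩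

end Gl

theorem views_agree_in_Gl_general (l i j1 j2 : ℕ) :
    view (Gl l) (bitsAgree l j1 j2) (i, j1) = view (Gl l) (bitsAgree l j1 j2) (i, j2) :=
  Gl_view_eq_of_modEq (Nat.findGreatest_le l)
    (Nat.findGreatest_spec (P := fun d => j1 ≡ j2 [MOD 2 ^ d]) (Nat.zero_le l) Nat.modEq_one)

/-- In `G_l`, two nodes in the same level whose column indices agree on their
`δ > 0` rightmost bits have equal views truncated to depth `δ`. -/
theorem views_agree_in_Gl (l i j1 j2 : ℕ) (hi : i ≤ l + 1)
    (h1 : j1 < 2 ^ l) (h2 : j2 < 2 ^ l) (hδ : 0 < bitsAgree l j1 j2) :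
    view (Gl l) (bitsAgree l j1 j2) (i, j1) = view (Gl l) (bitsAgree l j1 j2) (i, j2) :=
  views_agree_in_Gl_general l i j1 j2
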